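/- arXiv:2011.13003 — 4 statements merged into one kernel-verified Lean document; each statement's English description precedes it below -/
import Mathlib

section
/- Let C be a Krull-Schmidt category, let f : M → N and g : N → L be morphisms, and let N = ⊕_j N_j be a decomposition into indecomposable objects with inclusions i_j and projections p_j. If L is indecomposable and g∘f is a split surjection, then there exists an index j such that g∘i_j is an isomorphism and p_j∘f is a split surjection. -/
/-!
Choose a section `s` of `f ≫ g`. Since `⨁ N` is a biproduct,
`𝟙 L = s ≫ f ≫ g = ∑ j, (s ≫ f ≫ π j) ≫ (ι j ≫ g)`, and `End L` is local (an indecomposable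
object of a Krull–Schmidt category is isomorphic to one of its local summands), so some summand
is an isomorphism. Then `ι j ≫ g` is a split epimorphism out of `N j`, whose endomorphism ring is
local; a split epimorphism onto a nonzero object from an object with local endomorphism ring is
an isomorphism, and hence so is `s ≫ f ≫ π j`, which makes `f ≫ π j` split.
-/

open CategoryTheory CategoryTheory.Limits

/-- A (preadditive) category is Krull–Schmidt if every object is a finite direct sum of
objects having local endomorphism rings. -/
def IsKrullSchmidt (C : Type*) [Category C] [Preadditive C] [HasFiniteBiproducts C] [HasBinaryBiproducts C] : Prop :=
  ∀ X : C, ∃ (n : ℕ) (f : Fin n → C),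
    Nonempty (X ≅ ⨁ f) ∧ ∀ j, IsLocalRing (End (f j))

namespace CategoryTheory

variable {C : Type*} [Category C]

theorem isSplitEpi_of_isSplitEpi_comp {A B D : C} (s : A ⟶ B) (h : B ⟶ D)
    [IsSplitEpi (s ≫ h)] : IsSplitEpi h :=
  IsSplitEpi.mk' ⟨section_ (s ≫ h) ≫ s, by simp⟩

variable [Preadditive C]

def Iso.conjRingEquiv {X Y : C} (α : X ≅ Y) : End X ≃+* End Y :=
  { α.conj with
    map_add' := fun a b => by
      change α.inv ≫ (a + b) ≫ α.hom = α.inv ≫ a ≫ α.hom + α.inv ≫ b ≫ α.hom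
      rw [Preadditive.add_comp, Preadditive.comp_add] }

theorem Iso.isLocalRing_End {X Y : C} (α : X ≅ Y) [IsLocalRing (End X)] :
    IsLocalRing (End Y) :=
  (α.symm.conjRingEquiv : End Y →+* End X).domain_isLocalRing

theorem not_isZero_of_isLocalRing_End {X : C} [IsLocalRing (End X)] : ¬IsZero X :=
  fun hX => one_ne_zero (α := End X) (hX.eq_of_src _ _)

theorem exists_isIso_of_sum_eq_id {ι : Type*} (s : Finset ι) {X : C} [IsLocalRing (End X)]
    {h : ι → (X ⟶ X)} (hsum : ∑ i ∈ s, h i = 𝟙 X) : ∃ i ∈ s, IsIso (h i) := by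
  obtain ⟨i, hi, hu⟩ := IsLocalRing.exists_of_isUnit_sum (R := End X) (f := h) (s := s) (by
    convert isUnit_one
    exact hsum)
  exact ⟨i, hi, (isUnit_iff_isIso _).1 hu⟩

theorem isIso_of_isSplitEpi_of_isLocalRing_End {X L : C} (b : X ⟶ L) [IsSplitEpi b]
    [IsLocalRing (End X)] (hL : ¬IsZero L) : IsIso b := by
  let t := section_ b
  let e : End X := b ≫ t
  rcases IsLocalRing.isUnit_or_isUnit_of_add_one (add_sub_cancel e 1) with h | h
  · have : IsIso (b ≫ t) := (isUnit_iff_isIso _).1 h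
    have : Mono b := mono_of_mono b t
    exact isIso_of_mono_of_isSplitEpi b
  · have : IsIso (𝟙 X - b ≫ t) := (isUnit_iff_isIso _).1 h
    have hb : b = 0 := by
      rw [← cancel_epi (𝟙 X - b ≫ t)]
      simp [t]
    exact absurd (by rw [IsZero.iff_id_eq_zero, ← IsSplitEpi.id b]; simp [hb]) hL

namespace Limits

variable {ι : Type} [Fintype ι] [HasFiniteBiproducts C]

theorem biproduct.comp_eq_sum {T U : C} (f : ι → C) (a : T ⟶ ⨁ f) (b : ⨁ f ⟶ U) :
    a ≫ b = ∑ j, (a ≫ biproduct.π f j) ≫ (biproduct.ι f j ≫ b) := by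
  calc a ≫ b = a ≫ (∑ j, biproduct.π f j ≫ biproduct.ι f j) ≫ b := by
        rw [biproduct.total, Category.id_comp]
    _ = _ := by simp only [Preadditive.sum_comp, Preadditive.comp_sum, Category.assoc]

theorem biproduct.isZero_of_isEmpty [IsEmpty ι] (f : ι → C) : IsZero (⨁ f) := by
  rw [IsZero.iff_id_eq_zero]
  ext i
  exact isEmptyElim i

variable [HasBinaryBiproducts C] [DecidableEq ι]

noncomputable def biproduct.isoBiprodSubtypeNe (f : ι → C) (j : ι) :
    ⨁ f ≅ f j ⊞ ⨁ Subtype.restrict (· ≠ j) f where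
  hom := biprod.lift (biproduct.π f j) (biproduct.toSubtype f _)
  inv := biprod.desc (biproduct.ι f j) (biproduct.fromSubtype f _)
  hom_inv_id := by
    ext i k
    by_cases hi : i = j
    · subst hi
      simp [biproduct.ι_π]
    · simp [biproduct.ι_π, biproduct.ι_π_assoc, hi]
      split_ifs <;> simp_all
  inv_hom_id := by
    apply biprod.hom_ext <;> apply biprod.hom_ext' <;> simp

end Limits

variable [HasFiniteBiproducts C] [HasBinaryBiproducts C]

theorem Indecomposable.isLocalRing_End_of_iso_biproduct {ι : Type} [Finite ι] {f : ι → C}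
    [∀ j, IsLocalRing (End (f j))] {X : C} (hX : Indecomposable X) (e : X ≅ ⨁ f) :
    IsLocalRing (End X) := by
  classical
  have := Fintype.ofFinite ι
  obtain ⟨j⟩ : Nonempty ι := by
    by_contra hι
    rw [not_nonempty_iff] at hι
    exact hX.1 ((biproduct.isZero_of_isEmpty f).of_iso e)
  let d := e ≪≫ biproduct.isoBiprodSubtypeNe f j
  obtain hj | hrest := hX.2 _ _ d
  · exact absurd hj not_isZero_of_isLocalRing_End
  · exact (d ≪≫ (isoBiprodZero hrest).symm).symm.isLocalRing_End

theorem Indecomposable.isLocalRing_End (hKS : IsKrullSchmidt C) {X : C} (hX : Indecomposable X) :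
    IsLocalRing (End X) := by
  obtain ⟨n, f, ⟨e⟩, hf⟩ := hKS X
  exact hX.isLocalRing_End_of_iso_biproduct e

end CategoryTheory

/-- In a Krull–Schmidt category, if `f : M ⟶ N`, `g : N ⟶ L`,
`N = ⊕_j N_j` with all `N_j` indecomposable, `L` is indecomposable and `g ∘ f` is a split
surjection, then for some `j` the composite `g ∘ i_j` is an isomorphism and `p_j ∘ f` is a
split surjection. -/
theorem krullSchmidt_split_epi_through_biproduct
    {C : Type*} [Category C] [Preadditive C] [HasFiniteBiproducts C] [HasBinaryBiproducts C]
    (hKS : IsKrullSchmidt C)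
    {J : Type} [Fintype J] (N : J → C) (hN : ∀ j, Indecomposable (N j))
    {M L : C} (f : M ⟶ ⨁ N) (g : ⨁ N ⟶ L)
    (hL : Indecomposable L) (hgf : IsSplitEpi (f ≫ g)) :
    ∃ j : J, IsIso (biproduct.ι N j ≫ g) ∧ IsSplitEpi (f ≫ biproduct.π N j) := by
  have := hL.isLocalRing_End hKS
  obtain ⟨⟨s, hs⟩⟩ := hgf
  have hsum : ∑ j, (s ≫ f ≫ biproduct.π N j) ≫ (biproduct.ι N j ≫ g) = 𝟙 L := by
    simpa only [Category.assoc, hs] using (biproduct.comp_eq_sum N (s ≫ f) g).symm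
  obtain ⟨j, -, hj⟩ := exists_isIso_of_sum_eq_id Finset.univ hsum
  have := (hN j).isLocalRing_End hKS
  have := isSplitEpi_of_isSplitEpi_comp (s ≫ f ≫ biproduct.π N j) (biproduct.ι N j ≫ g)
  have := isIso_of_isSplitEpi_of_isLocalRing_End (biproduct.ι N j ≫ g) hL.1
  have := IsIso.of_isIso_comp_right (s ≫ f ≫ biproduct.π N j) (biproduct.ι N j ≫ g)
  exact ⟨j, inferInstance, isSplitEpi_of_isSplitEpi_comp s (f ≫ biproduct.π N j)⟩
end

section
/- Let C be an additive idempotent-complete category and C• a cochain complex of the form ⋯ → C^{i-1} → C^i → Z ⊕ W → C^{i+2} → ⋯ where the component a : C^i → Z of the differential is a split surjection. Then C• is homotopy equivalent to a complex ⋯ → C^{i-1} → Y → W → C^{i+2} → ⋯ for some object Y with C^i ≅ Y ⊕ Z. -/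
/-!
Let `a : K^i ⟶ Z` be the split-surjective component of the differential, `s` a section of it,
and `φ = e.hom ≫ fst ≫ s : K^{i+1} ⟶ K^i`. The chain map `ε = 𝟙 - (dφ + φd)` is homotopic to
the identity. It is the identity outside degrees `i, i + 1`; in degree `i` it is the idempotent
`1 - a s`, which splits through some `Y` by idempotent completeness (and then `K^i ≅ Y ⊞ Z`);
in degree `i + 1` it splits through the summand `W`. A chain endomorphism homotopic to the
identity whose components split through retracts makes those retracts a homotopy equivalent
complex.
-/

open CategoryTheory CategoryTheory.Limits

namespace HomologicalComplex

variable {C ι : Type*} [Category C] {c : ComplexShape ι}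

section Retracts

variable [HasZeroMorphisms C] (K : HomologicalComplex C c) {X : ι → C}
  (R : ∀ j, Retract (X j) (K.X j)) {ε : K ⟶ K} (hε : ∀ j, (R j).r ≫ (R j).i = ε.f j)

include hε in
lemma retract_r_i_comp_d (j k : ι) :
    (R j).r ≫ (R j).i ≫ K.d j k = K.d j k ≫ (R k).r ≫ (R k).i := by
  rw [← Category.assoc, hε, hε]
  exact ε.comm j k

@[simps]
def ofRetracts : HomologicalComplex C c where
  X := X
  d j k := (R j).i ≫ K.d j k ≫ (R k).r
  shape j k h := by rw [K.shape j k h, zero_comp, comp_zero]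
  d_comp_d' j k l _ _ := by
    simp only [Category.assoc]
    rw [reassoc_of% (K.retract_r_i_comp_d R hε j k).symm]
    simp

def toOfRetracts : K ⟶ K.ofRetracts R hε where
  f j := (R j).r
  comm' j k _ := by
    -- stated over `X k` rather than `(K.ofRetracts R hε).X k`, so that `rw` can act on it
    have h : (R j).r ≫ (R j).i ≫ K.d j k ≫ (R k).r = K.d j k ≫ (R k).r := by
      rw [reassoc_of% K.retract_r_i_comp_d R hε j k, (R k).retract, Category.comp_id]
    exact h

def fromOfRetracts : K.ofRetracts R hε ⟶ K where
  f j := (R j).i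
  comm' j k _ := by
    have h : (R j).i ≫ K.d j k = ((R j).i ≫ K.d j k ≫ (R k).r) ≫ (R k).i := by
      rw [Category.assoc, Category.assoc, ← K.retract_r_i_comp_d R hε j k, (R j).retract_assoc]
    exact h

end Retracts

variable [Preadditive C] (K : HomologicalComplex C c) {X : ι → C}
  (R : ∀ j, Retract (X j) (K.X j)) {ε : K ⟶ K} (hε : ∀ j, (R j).r ≫ (R j).i = ε.f j)

def homotopyEquivOfRetracts (H : Homotopy ε (𝟙 K)) : HomotopyEquiv K (K.ofRetracts R hε) where
  hom := K.toOfRetracts R hε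
  inv := K.fromOfRetracts R hε
  homotopyHomInvId := (Homotopy.ofEq (by ext j; exact hε j)).trans H
  homotopyInvHomId := Homotopy.ofEq (by ext j; exact (R j).retract)

end HomologicalComplex

namespace Homotopy

variable {C ι : Type*} [Category C] [Preadditive C] {c : ComplexShape ι}
  {K L : HomologicalComplex C c}

def subOfHomotopyZero (f : K ⟶ L) {g : K ⟶ L} (H : Homotopy g 0) : Homotopy (f - g) f :=
  (equivSubZero.symm ((ofEq (sub_sub_cancel f g)).trans H)).symm

end Homotopy

namespace CochainComplex

variable {C : Type*} [Category C] [Preadditive C] {K L : CochainComplex C ℤ} (n : ℤ)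
  (φ : K.X (n + 1) ⟶ L.X n)

noncomputable def homotopyHomAt (p q : ℤ) (_ : (ComplexShape.up ℤ).Rel q p) : K.X p ⟶ L.X q :=
  if h : p = n + 1 ∧ q = n then (K.XIsoOfEq h.1).hom ≫ φ ≫ (L.XIsoOfEq h.2).inv else 0

lemma nullHomotopicMap'_homotopyHomAt_f_self :
    (Homotopy.nullHomotopicMap' (homotopyHomAt n φ)).f n = K.d n (n + 1) ≫ φ := by
  rw [Homotopy.nullHomotopicMap'_f (c := ComplexShape.up ℤ) (k₂ := n - 1) (by simp) rfl]
  simp [homotopyHomAt]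

lemma nullHomotopicMap'_homotopyHomAt_f_succ :
    (Homotopy.nullHomotopicMap' (homotopyHomAt n φ)).f (n + 1) = φ ≫ L.d n (n + 1) := by
  rw [Homotopy.nullHomotopicMap'_f (c := ComplexShape.up ℤ) (k₂ := n) rfl rfl]
  simp [homotopyHomAt]

lemma nullHomotopicMap'_homotopyHomAt_f_of_ne {j : ℤ} (h₀ : j ≠ n) (h₁ : j ≠ n + 1) :
    (Homotopy.nullHomotopicMap' (homotopyHomAt n φ)).f j = 0 := by
  rw [Homotopy.nullHomotopicMap'_f (c := ComplexShape.up ℤ) (k₂ := j - 1) (by simp) rfl]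
  simp [homotopyHomAt, h₀, show j ≠ n + 1 by omega]

variable (K : CochainComplex C ℤ) {Y W : C} (R₀ : Retract Y (K.X n))
  (R₁ : Retract W (K.X (n + 1)))

def retractsAt (j : ℤ) : Σ X : C, Retract X (K.X j) :=
  if h₀ : j = n then ⟨Y, R₀.trans (K.XIsoOfEq h₀).symm.retract⟩
  else if h₁ : j = n + 1 then ⟨W, R₁.trans (K.XIsoOfEq h₁).symm.retract⟩
  else ⟨K.X j, Retract.refl _⟩

lemma retractsAt_self : K.retractsAt n R₀ R₁ n = ⟨Y, R₀⟩ := by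
  simp [retractsAt, Retract.trans]

lemma retractsAt_succ : K.retractsAt n R₀ R₁ (n + 1) = ⟨W, R₁⟩ := by
  simp [retractsAt, Retract.trans]

lemma retractsAt_of_ne {j : ℤ} (h₀ : j ≠ n) (h₁ : j ≠ n + 1) :
    K.retractsAt n R₀ R₁ j = ⟨K.X j, Retract.refl _⟩ := by
  simp [retractsAt, h₀, h₁]

lemma retractsAt_r_i {φ : K.X (n + 1) ⟶ K.X n}
    (h₀ : R₀.r ≫ R₀.i = 𝟙 _ - K.d n (n + 1) ≫ φ) (h₁ : R₁.r ≫ R₁.i = 𝟙 _ - φ ≫ K.d n (n + 1))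
    (j : ℤ) : (K.retractsAt n R₀ R₁ j).2.r ≫ (K.retractsAt n R₀ R₁ j).2.i =
      (𝟙 K - Homotopy.nullHomotopicMap' (homotopyHomAt n φ)).f j := by
  rw [HomologicalComplex.sub_f_apply, HomologicalComplex.id_f]
  obtain rfl | hn₀ := eq_or_ne n j
  · rw [retractsAt_self, h₀, nullHomotopicMap'_homotopyHomAt_f_self]
  obtain rfl | hn₁ := eq_or_ne (n + 1) j
  · rw [retractsAt_succ, h₁, nullHomotopicMap'_homotopyHomAt_f_succ]
  · rw [retractsAt_of_ne _ _ _ _ hn₀.symm hn₁.symm,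
      nullHomotopicMap'_homotopyHomAt_f_of_ne _ _ hn₀.symm hn₁.symm]
    simp

end CochainComplex

namespace CategoryTheory

variable {C : Type*} [Category C] [Preadditive C]

lemma exists_retract_id_sub_comp [IsIdempotentComplete C] {X Z : C} {a : X ⟶ Z} {s : Z ⟶ X}
    (hs : s ≫ a = 𝟙 Z) : ∃ (Y : C) (R : Retract Y X), R.r ≫ R.i = 𝟙 X - a ≫ s := by
  obtain ⟨Y, i, r, hir, hri⟩ := IsIdempotentComplete.idempotents_split X (𝟙 X - a ≫ s) (by
    simp only [Preadditive.sub_comp, Preadditive.comp_sub, Category.id_comp, Category.comp_id,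
      Category.assoc, reassoc_of% hs]
    abel)
  exact ⟨Y, ⟨i, r, hir⟩, hri⟩

noncomputable def Retract.isoBiprod [HasBinaryBiproducts C] {X Y Z : C} (R : Retract Y X)
    {a : X ⟶ Z} {s : Z ⟶ X} (hs : s ≫ a = 𝟙 Z) (hR : R.r ≫ R.i = 𝟙 X - a ≫ s) : X ≅ Y ⊞ Z where
  hom := biprod.lift R.r a
  inv := biprod.desc R.i s
  hom_inv_id := by rw [biprod.lift_desc, hR, sub_add_cancel]
  inv_hom_id := by
    have hia : R.i ≫ a = 0 := calc
      R.i ≫ a = R.i ≫ (R.r ≫ R.i) ≫ a := by rw [Category.assoc, R.retract_assoc]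
      _ = 0 := by simp [hR, Preadditive.sub_comp, hs]
    have hsr : s ≫ R.r = 0 := calc
      s ≫ R.r = s ≫ (R.r ≫ R.i) ≫ R.r := by rw [Category.assoc, R.retract, Category.comp_id]
      _ = 0 := by simp [hR, Preadditive.sub_comp, reassoc_of% hs]
    ext <;> simp [hia, hsr, hs]

@[simps]
noncomputable def Retract.ofIsoBiprod [HasBinaryBiproducts C] {P Z W : C} (e : P ≅ Z ⊞ W)
    (v : Z ⟶ P) : Retract W P where
  i := biprod.inr ≫ e.inv
  r := (𝟙 P - e.hom ≫ biprod.fst ≫ v) ≫ e.hom ≫ biprod.snd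

lemma Retract.ofIsoBiprod_r_i [HasBinaryBiproducts C] {P Z W : C} (e : P ≅ Z ⊞ W) {v : Z ⟶ P}
    (hv : v ≫ e.hom ≫ biprod.fst = 𝟙 Z) :
    (Retract.ofIsoBiprod e v).r ≫ (Retract.ofIsoBiprod e v).i =
      𝟙 P - e.hom ≫ biprod.fst ≫ v := by
  rw [← cancel_mono e.hom]
  ext <;> simp [Preadditive.sub_comp, hv]

end CategoryTheory

open HomologicalComplex CochainComplex in
/-- Let `C` be an additive idempotent-complete category and `K` a
cochain complex whose `(i+1)`-st term is decomposed as `Z ⊞ W`, with the component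
`a : K^i ⟶ Z` of the differential a split surjection.  Then `K` is homotopy equivalent to
a complex agreeing with `K` outside degrees `i, i+1`, with objects `Y` and `W` in degrees
`i` and `i+1`, for some object `Y` with `K^i ≅ Y ⊞ Z`. -/
theorem gaussian_elimination_split_epi
    {C : Type*} [Category C] [Preadditive C] [HasBinaryBiproducts C] [IsIdempotentComplete C]
    (Kc : CochainComplex C ℤ) (i : ℤ) (Z W : C)
    (eZW : Kc.X (i + 1) ≅ Z ⊞ W)
    (ha : IsSplitEpi (Kc.d i (i + 1) ≫ eZW.hom ≫ biprod.fst)) :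
    ∃ (Y : C) (L : CochainComplex C ℤ),
      Nonempty (Kc.X i ≅ Y ⊞ Z) ∧
      Nonempty (HomotopyEquiv Kc L) ∧
      Nonempty (L.X i ≅ Y) ∧ Nonempty (L.X (i + 1) ≅ W) ∧
      (∀ j : ℤ, j ≠ i → j ≠ i + 1 → Nonempty (L.X j ≅ Kc.X j)) := by
  obtain ⟨s, hs⟩ : ∃ s, s ≫ Kc.d i (i + 1) ≫ eZW.hom ≫ biprod.fst = 𝟙 Z :=
    ⟨_, ha.exists_splitEpi.some.id⟩
  obtain ⟨Y, R₀, hR₀⟩ := exists_retract_id_sub_comp hs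
  have hF := Kc.retractsAt_r_i i R₀ (Retract.ofIsoBiprod eZW (s ≫ Kc.d i (i + 1)))
    (φ := eZW.hom ≫ biprod.fst ≫ s) (by simp [hR₀])
    ((Retract.ofIsoBiprod_r_i eZW (by simpa using hs)).trans (by simp only [Category.assoc]))
  refine ⟨Y, Kc.ofRetracts _ hF, ⟨R₀.isoBiprod hs hR₀⟩,
    ⟨Kc.homotopyEquivOfRetracts _ hF (Homotopy.subOfHomotopyZero _ (Homotopy.nullHomotopy' _))⟩,
    ⟨eqToIso ?_⟩, ⟨eqToIso ?_⟩, fun j h₀ h₁ => ⟨eqToIso ?_⟩⟩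
  · rw [ofRetracts_X, retractsAt_self]
  · rw [ofRetracts_X, retractsAt_succ]
  · rw [ofRetracts_X, retractsAt_of_ne _ _ _ _ h₀ h₁]
end

section
/- For integers k, ℓ, r ≥ 0 with n = k + ℓ + r, the multiplication map P_n^{S_{k+ℓ} × S_r} ⊗ P_n^{S_k × S_{ℓ+r}} → P_n^{S_k × S_ℓ × S_r} is surjective, where P_n = K[x_1,…,x_n] and superscripts denote invariants under the indicated Young subgroups of the symmetric group S_n permuting the variables. -/
open MvPolynomial

/-- A permutation `σ` of `Fin n` lies in the Young subgroup determined by the composition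
whose block boundaries are the thresholds in `T` iff it preserves each initial segment
`{i | i.val < t}` for `t ∈ T`. -/
def InYoung {n : ℕ} (T : Set ℕ) (σ : Equiv.Perm (Fin n)) : Prop :=
  ∀ t ∈ T, ∀ i : Fin n, (σ i).val < t ↔ i.val < t

/-- The set of polynomials invariant under the Young subgroup with thresholds `T`. -/
def YoungInv (K : Type) [Field K] {n : ℕ} (T : Set ℕ) : Set (MvPolynomial (Fin n) K) :=
  {P | ∀ σ : Equiv.Perm (Fin n), InYoung T σ → rename σ P = P}

/-!
Write `A`, `B`, `C` for the three blocks of variables. Since `P` is symmetric in `C`, the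
fundamental theorem of symmetric polynomials over the coefficient ring `K[A ∪ B]` writes it as a
polynomial in the elementary symmetric polynomials of `C`; the coefficients are unique, hence
inherit the `S_k × S_ℓ` symmetry of `P`. Splitting them once more along `A ∪ B` shows that the
invariants are generated by symmetric polynomials in `A`, in `B` and in `C`. Those in `A` and in
`C` are invariant under one of the two coarser Young subgroups. For `B`, the identity
`e_j(A ∪ B) = ∑_{p + q = j} e_p(A) e_q(B)` expresses `e_j(B)` through `e_j(A ∪ B)` and lower
`e_q(B)`, so it lies in the algebra generated by the two coarser invariant rings, and the span of
their products is that algebra.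
-/

open Finset in
lemma Finset.coeff_prod_one_add_C_mul_X {ι S : Type*} [CommSemiring S] (s : Finset ι)
    (f : ι → S) (j : ℕ) :
    (∏ i ∈ s, (1 + Polynomial.C (f i) * Polynomial.X)).coeff j =
      ∑ t ∈ s.powersetCard j, ∏ i ∈ t, f i := by
  classical
  simp only [prod_one_add, prod_mul_distrib, ← map_prod, prod_const,
    Polynomial.finsetSum_coeff, Polynomial.coeff_C_mul_X_pow]
  rw [powersetCard_eq_filter, sum_filter]
  exact sum_congr rfl fun t _ ↦ by split_ifs <;> simp_all [eq_comm]

open Finset in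
lemma mem_of_sum_antidiagonal_mul_mem {A S : Type*} [CommRing A] [SetLike S A]
    [SubringClass S A] {s : S} {a b c : ℕ → A} (ha₀ : a 0 = 1)
    (hc : ∀ j, c j = ∑ p ∈ antidiagonal j, a p.1 * b p.2)
    (ha_mem : ∀ j, a j ∈ s) (hc_mem : ∀ j, c j ∈ s) (j : ℕ) : b j ∈ s := by
  induction j using Nat.strong_induction_on with
  | _ j ih =>
    cases j with
    | zero => simpa [hc, ha₀] using hc_mem 0
    | succ j =>
      have h : b (j + 1) = c (j + 1) - ∑ p ∈ antidiagonal j, a (p.1 + 1) * b p.2 := by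
        rw [hc, Nat.sum_antidiagonal_succ, ha₀]
        ring
      rw [h]
      exact sub_mem (hc_mem _)
        (sum_mem fun p hp ↦ mul_mem (ha_mem _) (ih _ (Nat.antidiagonal.snd_lt hp)))

namespace MvPolynomial

open Finset

section Splitting

variable {R : Type*} [CommSemiring R] {σ τ : Type*}

lemma sumAlgEquiv_rename_sumCongr_left (π : Equiv.Perm τ) (P : MvPolynomial (τ ⊕ σ) R) :
    sumAlgEquiv R τ σ (rename (Equiv.sumCongr π (Equiv.refl σ)) P) =
      rename π (sumAlgEquiv R τ σ P) := by
  have h : (sumAlgEquiv R τ σ).toAlgHom.comp (rename (Equiv.sumCongr π (Equiv.refl σ))) =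
      ((rename π).restrictScalars R).comp (sumAlgEquiv R τ σ).toAlgHom := by
    ext (i | i) <;> simp
  exact DFunLike.congr_fun h P

lemma sumAlgEquiv_rename_sumCongr_right (ρ : Equiv.Perm σ) (P : MvPolynomial (τ ⊕ σ) R) :
    sumAlgEquiv R τ σ (rename (Equiv.sumCongr (Equiv.refl τ) ρ) P) =
      map (rename ρ : MvPolynomial σ R →ₐ[R] _) (sumAlgEquiv R τ σ P) := by
  have h : (sumAlgEquiv R τ σ).toAlgHom.comp (rename (Equiv.sumCongr (Equiv.refl τ) ρ)) =
      (mapAlgHom (rename ρ)).comp (sumAlgEquiv R τ σ).toAlgHom := by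
    ext (i | i) <;> simp
  exact DFunLike.congr_fun h P

lemma sumAlgEquiv_rename_inl (v : MvPolynomial τ R) :
    sumAlgEquiv R τ σ (rename Sum.inl v) = map C v :=
  DFunLike.congr_fun (sumAlgEquiv_comp_rename_inl R τ σ) v

lemma sumAlgEquiv_rename_inr (u : MvPolynomial σ R) :
    sumAlgEquiv R τ σ (rename Sum.inr u) = C u :=
  DFunLike.congr_fun (sumAlgEquiv_comp_rename_inr R τ σ) u

variable [Fintype τ]

lemma map_aeval_esymm {S : Type*} [CommSemiring S] (f : R →+* S) {n : ℕ}
    (W : MvPolynomial (Fin n) R) :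
    map f (aeval (fun i : Fin n ↦ esymm τ R (i + 1)) W) =
      aeval (fun i : Fin n ↦ esymm τ S (i + 1)) (map f W) := by
  rw [map_aeval, aeval_def, eval₂_map]
  simp only [algebraMap_eq, map_comp_C, map_esymm, coe_eval₂Hom]

lemma isSymmetric_finsuppProd_esymm {n : ℕ} (d : Fin n →₀ ℕ) :
    (d.prod fun i e ↦ esymm τ R (i + 1) ^ e).IsSymmetric := by
  rw [← mem_symmetricSubalgebra]
  exact Subalgebra.prod_mem _ fun i _ ↦
    pow_mem ((mem_symmetricSubalgebra _).2 (esymm_isSymmetric τ R _)) _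

end Splitting

theorem mem_adjoin_of_rename_sumCongr_eq {R σ τ : Type*} [CommRing R] [Fintype τ]
    (G : Set (Equiv.Perm σ)) {P : MvPolynomial (τ ⊕ σ) R}
    (hτ : ∀ π : Equiv.Perm τ, rename (Equiv.sumCongr π (Equiv.refl σ)) P = P)
    (hG : ∀ ρ ∈ G, rename (Equiv.sumCongr (Equiv.refl τ) ρ) P = P) :
    P ∈ Algebra.adjoin R (rename Sum.inl '' {v : MvPolynomial τ R | v.IsSymmetric} ∪
      rename Sum.inr '' {u | ∀ ρ ∈ G, rename ρ u = u}) := by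
  classical
  set Q := sumAlgEquiv R τ σ P
  have hQ : Q.IsSymmetric := fun π ↦ by rw [← sumAlgEquiv_rename_sumCongr_left, hτ]
  obtain ⟨W, hW⟩ := esymmAlgHom_surjective (MvPolynomial σ R) le_rfl ⟨Q, hQ⟩
  replace hW : aeval (fun i : Fin (Fintype.card τ) ↦ esymm τ _ (i + 1)) W = Q := by
    rw [← esymmAlgHom_apply, hW]
  have hcoeff (d) : ∀ ρ ∈ G, rename ρ (coeff d W) = coeff d W := by
    intro ρ hρ
    have hWρ : map (rename ρ : MvPolynomial σ R →ₐ[R] _) W = W := by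
      refine esymmAlgHom_injective _ le_rfl (Subtype.ext ?_)
      rw [esymmAlgHom_apply, esymmAlgHom_apply, ← map_aeval_esymm, hW,
        ← sumAlgEquiv_rename_sumCongr_right, hG ρ hρ]
    simpa only [coeff_map, RingHom.coe_coe] using congrArg (coeff d) hWρ
  have hP : P = ∑ d ∈ W.support, rename Sum.inr (coeff d W) *
      rename Sum.inl (d.prod fun i e ↦ esymm τ R (i + 1) ^ e) := by
    apply (sumAlgEquiv R τ σ).injective
    change Q = _
    rw [← hW]
    conv_lhs => rw [W.as_sum]
    simp only [map_sum, map_mul, aeval_monomial, sumAlgEquiv_rename_inl, sumAlgEquiv_rename_inr,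
      algebraMap_eq, map_finsuppProd, map_pow, map_esymm]
  rw [hP]
  exact Subalgebra.sum_mem _ fun d _ ↦ Subalgebra.mul_mem _
    (Algebra.subset_adjoin (Or.inr ⟨_, hcoeff d, rfl⟩))
    (Algebra.subset_adjoin (Or.inl ⟨_, isSymmetric_finsuppProd_esymm d, rfl⟩))

section Esymm

variable {R S σ τ : Type*} [CommSemiring R] [CommSemiring S] [Algebra R S] [Fintype σ]
  [Fintype τ]

lemma aeval_esymm_eq_coeff_prod (f : σ → S) (j : ℕ) :
    aeval f (esymm σ R j) = (∏ i, (1 + Polynomial.C (f i) * Polynomial.X)).coeff j := by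
  rw [aeval_esymm_eq_multiset_esymm, Finset.esymm_map_val, Finset.coeff_prod_one_add_C_mul_X]

lemma esymm_sum (j : ℕ) :
    esymm (σ ⊕ τ) R j = ∑ p ∈ antidiagonal j,
      rename Sum.inl (esymm σ R p.1) * rename Sum.inr (esymm τ R p.2) := by
  rw [← aeval_X_left_apply (esymm (σ ⊕ τ) R j), aeval_esymm_eq_coeff_prod, Fintype.prod_sum_type,
    Polynomial.coeff_mul]
  simp only [rename_eq_aeval, aeval_esymm_eq_coeff_prod, Function.comp_apply]

end Esymm

lemma IsSymmetric.mem_adjoin_esymm {R σ : Type*} [CommRing R] [Fintype σ] {v : MvPolynomial σ R}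
    (hv : v.IsSymmetric) :
    v ∈ Algebra.adjoin R (Set.range fun i : Fin (Fintype.card σ) ↦ esymm σ R (i + 1)) := by
  obtain ⟨W, hW⟩ := esymmAlgHom_surjective R le_rfl ⟨v, hv⟩
  rw [Algebra.adjoin_range_eq_range_aeval]
  exact ⟨W, by rw [AlgHom.toRingHom_eq_coe, RingHom.coe_coe, ← esymmAlgHom_apply, hW]⟩

lemma IsSymmetric.rename_perm_eq {R ι τ : Type*} [CommSemiring R] [Finite τ]
    {g : τ → ι} (hg : Function.Injective g) {v : MvPolynomial τ R} (hv : v.IsSymmetric)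
    {σ : Equiv.Perm ι} (hσ : ∀ x, ∃ y, g y = σ (g x)) :
    rename σ (rename g v) = rename g v := by
  choose f hf using hσ
  have hf_inj : Function.Injective f := fun x x' h ↦ hg (σ.injective (by rw [← hf, ← hf, h]))
  have hcomm : (σ : ι → ι) ∘ g = g ∘ Equiv.ofBijective f hf_inj.bijective_of_finite := by
    funext x
    exact (hf x).symm
  rw [rename_rename, hcomm, ← rename_rename, hv]

end MvPolynomial

def youngSubalgebra (K : Type) [Field K] (n : ℕ) (T : Set ℕ) :
    Subalgebra K (MvPolynomial (Fin n) K) where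
  carrier := YoungInv K T
  mul_mem' hf hg σ hσ := by rw [map_mul, hf σ hσ, hg σ hσ]
  add_mem' hf hg σ hσ := by rw [map_add, hf σ hσ, hg σ hσ]
  algebraMap_mem' c σ _ := (rename σ).commutes c

section Young

variable {K : Type} [Field K]

@[simp]
lemma mem_youngSubalgebra {n : ℕ} {T : Set ℕ} {P : MvPolynomial (Fin n) K} :
    P ∈ youngSubalgebra K n T ↔ P ∈ YoungInv K T :=
  Iff.rfl

lemma span_mul_youngInv_eq (n : ℕ) (T T' : Set ℕ) :
    Submodule.span K {z : MvPolynomial (Fin n) K | ∃ f g, f ∈ YoungInv K T ∧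
        g ∈ YoungInv K T' ∧ z = f * g} =
      Subalgebra.toSubmodule (youngSubalgebra K n T ⊔ youngSubalgebra K n T') := by
  rw [← Subalgebra.mul_toSubmodule, Submodule.mul_eq_span_mul_set]
  congr 1
  ext z
  simp [Set.mem_mul, eq_comm]

lemma inYoung_refl {n : ℕ} (T : Set ℕ) : InYoung T (Equiv.refl (Fin n)) :=
  fun _ _ _ ↦ Iff.rfl

lemma isSymmetric_of_mem_youngInv {m : ℕ} {T : Set ℕ} (hT : ∀ t ∈ T, m ≤ t)
    {P : MvPolynomial (Fin m) K} (hP : P ∈ YoungInv K T) : P.IsSymmetric :=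
  fun σ ↦ hP σ fun t ht i ↦ iff_of_true ((σ i).2.trans_le (hT t ht)) (i.2.trans_le (hT t ht))

lemma rename_castLE_mem_youngInv {a n : ℕ} (h : a ≤ n) {v : MvPolynomial (Fin a) K}
    (hv : v.IsSymmetric) : rename (Fin.castLE h) v ∈ YoungInv K {a} := by
  intro σ hσ
  refine hv.rename_perm_eq (Fin.castLE_injective h) fun x ↦ ?_
  have hlt : (σ (Fin.castLE h x) : ℕ) < a := (hσ a rfl _).2 x.2
  exact ⟨⟨_, hlt⟩, rfl⟩

lemma rename_natAdd_mem_youngInv {a b : ℕ} {v : MvPolynomial (Fin b) K}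
    (hv : v.IsSymmetric) : rename (Fin.natAdd a) v ∈ YoungInv K {a} := by
  intro σ hσ
  refine hv.rename_perm_eq (Fin.natAdd_injective b a) fun x ↦ ?_
  have hge : a ≤ (σ (Fin.natAdd a x) : ℕ) :=
    not_lt.1 fun h ↦ by simpa using (hσ a rfl _).1 h
  exact ⟨⟨σ (Fin.natAdd a x) - a, by omega⟩, Fin.ext (by simp only [Fin.val_natAdd]; omega)⟩

lemma rename_symm_perm_eq_of_mem_youngInv {n : ℕ} {α : Type*} (E : α ≃ Fin n) {T : Set ℕ}
    {P : MvPolynomial (Fin n) K} (hP : P ∈ YoungInv K T) {π : Equiv.Perm α}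
    (hπ : InYoung T (E.permCongr π)) :
    rename π (rename E.symm P) = rename E.symm P := by
  have h : (π : α → α) ∘ E.symm = E.symm ∘ E.permCongr π := by
    funext x
    simp [Equiv.permCongr_apply]
  rw [rename_rename, h, ← rename_rename, hP _ hπ]

lemma inYoung_permCongr_sumCongr {a b : ℕ} {T : Set ℕ} (hT : ∀ t ∈ T, t ≤ a ∨ a + b ≤ t)
    (π : Equiv.Perm (Fin b)) {ρ : Equiv.Perm (Fin a)} (hρ : InYoung T ρ) :
    InYoung T (((Equiv.sumComm (Fin b) (Fin a)).trans finSumFinEquiv).permCongr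
      (Equiv.sumCongr π ρ)) := by
  intro t ht i
  obtain ⟨x | x, rfl⟩ := ((Equiv.sumComm (Fin b) (Fin a)).trans finSumFinEquiv).surjective i
  all_goals rw [Equiv.permCongr_apply, Equiv.symm_apply_apply]
  · simp only [Equiv.sumCongr_apply, Sum.map_inl, Equiv.trans_apply, Equiv.sumComm_apply,
      Sum.swap_inl, finSumFinEquiv_apply_right, Fin.val_natAdd]
    have := (π x).2
    rcases hT t ht with h | h <;> omega
  · simp only [Equiv.sumCongr_apply, Sum.map_inr, Equiv.trans_apply, Equiv.sumComm_apply,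
      Sum.swap_inr, finSumFinEquiv_apply_left, Fin.val_castAdd]
    rcases hT t ht with h | h
    · exact hρ t ht x
    · have := (ρ x).2
      omega

theorem mem_adjoin_of_mem_youngInv {a b : ℕ} {T : Set ℕ} (hT : ∀ t ∈ T, t ≤ a ∨ a + b ≤ t)
    {P : MvPolynomial (Fin (a + b)) K} (hP : P ∈ YoungInv K T) :
    P ∈ Algebra.adjoin K (rename (Fin.natAdd a) '' {v : MvPolynomial (Fin b) K | v.IsSymmetric} ∪
      rename (Fin.castAdd b) '' YoungInv K T) := by
  set E := (Equiv.sumComm (Fin b) (Fin a)).trans finSumFinEquiv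
  have h := mem_adjoin_of_rename_sumCongr_eq {ρ | InYoung T ρ} (P := rename E.symm P)
    (fun π ↦ rename_symm_perm_eq_of_mem_youngInv E hP
      (inYoung_permCongr_sumCongr hT π (inYoung_refl T)))
    (fun ρ hρ ↦ rename_symm_perm_eq_of_mem_youngInv E hP (inYoung_permCongr_sumCongr hT _ hρ))
  have hE : rename E (rename E.symm P) = P := by
    rw [rename_rename, E.self_comp_symm, rename_id_apply]
  have hl : ⇑E ∘ Sum.inl = Fin.natAdd a := rfl
  have hr : ⇑E ∘ Sum.inr = Fin.castAdd b := rfl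
  have hmap := Subalgebra.mem_map.2 ⟨_, h, hE⟩
  simp only [AlgHom.map_adjoin, Set.image_union, Set.image_image, rename_rename, hl, hr] at hmap
  exact hmap

lemma rename_castAdd_natAdd_esymm_mem (k ℓ r j : ℕ) :
    rename (Fin.castAdd r) (rename (Fin.natAdd k) (esymm (Fin ℓ) K j)) ∈
      youngSubalgebra K (k + ℓ + r) {k + ℓ} ⊔ youngSubalgebra K (k + ℓ + r) {k} := by
  have hk : k ≤ k + ℓ + r := by omega
  refine mem_of_sum_antidiagonal_mul_mem
    (a := fun j ↦ rename (Fin.castLE hk) (esymm (Fin k) K j))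
    (b := fun j ↦ rename (Fin.castAdd r) (rename (Fin.natAdd k) (esymm (Fin ℓ) K j)))
    (c := fun j ↦ rename (Fin.castAdd r) (esymm (Fin (k + ℓ)) K j)) ?_ (fun j ↦ ?_)
    (fun j ↦ le_sup_right (a := youngSubalgebra K (k + ℓ + r) {k + ℓ})
      (rename_castLE_mem_youngInv hk (esymm_isSymmetric _ _ j)))
    (fun j ↦ le_sup_left (b := youngSubalgebra K (k + ℓ + r) {k})
      (rename_castLE_mem_youngInv _ (esymm_isSymmetric _ _ j))) j
  · simp [esymm_zero]
  · rw [← rename_esymm _ _ j finSumFinEquiv, esymm_sum]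
    simp only [map_sum, map_mul, rename_rename]
    rfl

lemma MvPolynomial.IsSymmetric.rename_castAdd_natAdd_mem {k ℓ r : ℕ}
    {v : MvPolynomial (Fin ℓ) K} (hv : v.IsSymmetric) :
    rename (Fin.castAdd r) (rename (Fin.natAdd k) v) ∈
      youngSubalgebra K (k + ℓ + r) {k + ℓ} ⊔ youngSubalgebra K (k + ℓ + r) {k} := by
  rw [← AlgHom.comp_apply, ← Subalgebra.mem_comap]
  refine Algebra.adjoin_le ?_ hv.mem_adjoin_esymm
  rintro _ ⟨i, rfl⟩
  exact rename_castAdd_natAdd_esymm_mem k ℓ r _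

lemma rename_castAdd_mem_sup {k ℓ r : ℕ} {u : MvPolynomial (Fin (k + ℓ)) K}
    (hu : u ∈ YoungInv K {k, k + ℓ}) :
    rename (Fin.castAdd r) u ∈
      youngSubalgebra K (k + ℓ + r) {k + ℓ} ⊔ youngSubalgebra K (k + ℓ + r) {k} := by
  rw [← Subalgebra.mem_comap]
  refine Algebra.adjoin_le ?_ (mem_adjoin_of_mem_youngInv (by simp) hu)
  rintro _ (⟨v, hv, rfl⟩ | ⟨w, hw, rfl⟩)
  · exact hv.rename_castAdd_natAdd_mem
  · refine le_sup_right (a := youngSubalgebra K (k + ℓ + r) {k + ℓ}) ?_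
    change rename (Fin.castAdd r) (rename (Fin.castAdd ℓ) w) ∈ _
    rw [rename_rename]
    exact rename_castLE_mem_youngInv (by omega) (isSymmetric_of_mem_youngInv (by simp) hw)

theorem youngSubalgebra_pair_le_sup (k ℓ r : ℕ) :
    youngSubalgebra K (k + ℓ + r) {k, k + ℓ} ≤
      youngSubalgebra K (k + ℓ + r) {k + ℓ} ⊔ youngSubalgebra K (k + ℓ + r) {k} := by
  intro P hP
  refine Algebra.adjoin_le ?_ (mem_adjoin_of_mem_youngInv (by simp) hP)
  rintro _ (⟨v, hv, rfl⟩ | ⟨u, hu, rfl⟩)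
  · exact le_sup_left (b := youngSubalgebra K (k + ℓ + r) {k}) (rename_natAdd_mem_youngInv hv)
  · exact rename_castAdd_mem_sup hu

end Young

/-- For `n = k + ℓ + r`, the multiplication map
`P_n^{S_{k+ℓ} × S_r} ⊗ P_n^{S_k × S_{ℓ+r}} → P_n^{S_k × S_ℓ × S_r}` is surjective:
every polynomial invariant under `S_k × S_ℓ × S_r` is a `K`-linear combination of
products `f * g` with `f` invariant under `S_{k+ℓ} × S_r` and `g` invariant under
`S_k × S_{ℓ+r}`. -/
theorem young_invariants_multiplication_surjective
    (K : Type) [Field K] (k ℓ r : ℕ) (n : ℕ) (hn : n = k + ℓ + r)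
    (P : MvPolynomial (Fin n) K) (hP : P ∈ YoungInv K {k, k + ℓ}) :
    P ∈ Submodule.span K
      {z : MvPolynomial (Fin n) K | ∃ f g, f ∈ YoungInv K {k + ℓ} ∧
        g ∈ YoungInv K {k} ∧ z = f * g} := by
  subst hn
  rw [span_mul_youngInv_eq]
  exact youngSubalgebra_pair_le_sup k ℓ r hP
end

section
/- In the affine nil Hecke algebra H_n over a field K (generated by commuting x_1,…,x_n and τ_1,…,τ_{n-1} with τ_k² = 0, braid relations, and τ_k x_i − x_{s_k(i)} τ_k = δ_{i,k+1} − δ_{i,k}), the assignment x_k ↦ multiplication by x_k on P_n = K[x_1,…,x_n] and τ_k ↦ the Demazure operator ∂_k(P) = (P − s_k(P))/(x_{k+1} − x_k) defines a well-defined K-algebra homomorphism H_n → End_{P_n^{S_n}}(P_n). -/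
/-!
Since `P - s_{ab} P` vanishes on `X a = X b`, it is divisible by `X b - X a`, and over a domain
the quotient `∂_{ab} P` is unique. So every identity between Demazure operators can be checked
after multiplying by a nonzero product of differences `X j - X i`. The twisted Leibniz rule
`∂(f g) = ∂f · g + s(f) · ∂g` gives the mixed relations and linearity over symmetric polynomials;
`∂² = 0` because `∂P` is `s`-invariant; distant operators commute by `S_n`-equivariance; and both
sides of the braid relation, multiplied by the Vandermonde product of `a, b, c`, equal the
alternating sum of `w(P)` over the permutations `w` of `{a, b, c}`.
-/
open MvPolynomial

/-- Generators of the affine nil Hecke algebra `H_n`: `x i` for `i : Fin n` and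
`t k` for `k : Fin (n-1)` (so `t k` corresponds to `τ_{k+1}` in one-based notation). -/
inductive NHGen (n : ℕ) : Type
  | x : Fin n → NHGen n
  | t : Fin (n - 1) → NHGen n

namespace NHGen

/-- The image in `Fin n` of the smaller index of `t k`. -/
def lo {n : ℕ} (k : Fin (n - 1)) : Fin n := ⟨k.val, by have := k.isLt; omega⟩
/-- The image in `Fin n` of the larger index of `t k`. -/
def hi {n : ℕ} (k : Fin (n - 1)) : Fin n := ⟨k.val + 1, by have := k.isLt; omega⟩

end NHGen

/-- The defining relations of the affine nil Hecke algebra. -/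
inductive NHRel (K : Type) [Field K] (n : ℕ) :
    FreeAlgebra K (NHGen n) → FreeAlgebra K (NHGen n) → Prop
  | xx (i j : Fin n) : NHRel K n
      (FreeAlgebra.ι K (NHGen.x i) * FreeAlgebra.ι K (NHGen.x j))
      (FreeAlgebra.ι K (NHGen.x j) * FreeAlgebra.ι K (NHGen.x i))
  | tsq (k : Fin (n - 1)) : NHRel K n
      (FreeAlgebra.ι K (NHGen.t k) * FreeAlgebra.ι K (NHGen.t k)) 0
  | tx (k : Fin (n - 1)) (i : Fin n) : NHRel K n
      (FreeAlgebra.ι K (NHGen.t k) * FreeAlgebra.ι K (NHGen.x i) -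
        FreeAlgebra.ι K (NHGen.x (Equiv.swap (NHGen.lo k) (NHGen.hi k) i)) *
          FreeAlgebra.ι K (NHGen.t k))
      ((if i = NHGen.hi k then 1 else 0) - (if i = NHGen.lo k then 1 else 0))
  | tt (k l : Fin (n - 1)) (h : k.val + 1 < l.val) : NHRel K n
      (FreeAlgebra.ι K (NHGen.t k) * FreeAlgebra.ι K (NHGen.t l))
      (FreeAlgebra.ι K (NHGen.t l) * FreeAlgebra.ι K (NHGen.t k))
  | braid (k l : Fin (n - 1)) (h : l.val = k.val + 1) : NHRel K n
      (FreeAlgebra.ι K (NHGen.t l) * FreeAlgebra.ι K (NHGen.t k) * FreeAlgebra.ι K (NHGen.t l))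
      (FreeAlgebra.ι K (NHGen.t k) * FreeAlgebra.ι K (NHGen.t l) * FreeAlgebra.ι K (NHGen.t k))

/-- The affine nil Hecke algebra `H_n` over `K`, presented by generators and relations. -/
def NilHecke (K : Type) [Field K] (n : ℕ) : Type := RingQuot (NHRel K n)

noncomputable instance (K : Type) [Field K] (n : ℕ) : Ring (NilHecke K n) :=
  inferInstanceAs (Ring (RingQuot (NHRel K n)))

noncomputable instance (K : Type) [Field K] (n : ℕ) : Algebra K (NilHecke K n) :=
  inferInstanceAs (Algebra K (RingQuot (NHRel K n)))

/-- The generator `x_{i+1}` of `H_n` (zero-based index `i`). -/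
noncomputable def xgen {K : Type} [Field K] {n : ℕ} (i : Fin n) : NilHecke K n :=
  RingQuot.mkAlgHom K (NHRel K n) (FreeAlgebra.ι K (NHGen.x i))

/-- The generator `τ_{k+1}` of `H_n` (zero-based index `k`). -/
noncomputable def tgen {K : Type} [Field K] {n : ℕ} (k : Fin (n - 1)) : NilHecke K n :=
  RingQuot.mkAlgHom K (NHRel K n) (FreeAlgebra.ι K (NHGen.t k))

namespace MvPolynomial

variable {σ R : Type*} [CommRing R]

theorem X_sub_X_ne_zero [IsDomain R] {a b : σ} (hab : a ≠ b) :
    (X b - X a : MvPolynomial σ R) ≠ 0 :=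
  sub_ne_zero.mpr fun h => hab (X_injective h).symm

variable [DecidableEq σ]

theorem exists_mul_X_sub_X_eq_sub_rename_swap (a b : σ) (P : MvPolynomial σ R) :
    ∃ Q, Q * (X b - X a) = P - rename (Equiv.swap a b) P := by
  induction P using MvPolynomial.induction_on with
  | C r => exact ⟨0, by simp⟩
  | add P₁ P₂ h₁ h₂ =>
    obtain ⟨Q₁, hQ₁⟩ := h₁
    obtain ⟨Q₂, hQ₂⟩ := h₂
    exact ⟨Q₁ + Q₂, by rw [map_add]; linear_combination hQ₁ + hQ₂⟩
  | mul_X P i h =>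
    obtain ⟨Q, hQ⟩ := h
    rw [map_mul, rename_X]
    by_cases hia : i = a
    · subst hia
      exact ⟨Q * X i - rename (Equiv.swap i b) P, by
        rw [Equiv.swap_apply_left]; linear_combination (X i : MvPolynomial σ R) * hQ⟩
    by_cases hib : i = b
    · subst hib
      exact ⟨Q * X i + rename (Equiv.swap a i) P, by
        rw [Equiv.swap_apply_right]; linear_combination (X i : MvPolynomial σ R) * hQ⟩
    exact ⟨Q * X i, by
      rw [Equiv.swap_apply_of_ne_of_ne hia hib]; linear_combination (X i : MvPolynomial σ R) * hQ⟩

theorem rename_swap_rename_swap (a b : σ) (P : MvPolynomial σ R) :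
    rename (Equiv.swap a b) (rename (Equiv.swap a b) P) = P := by
  rw [rename_rename, ← Equiv.coe_trans, Equiv.swap_swap, Equiv.coe_refl, rename_id_apply]

variable [IsDomain R]

/-- The Demazure operator `∂_{ab} P = (P - s_{ab} P) / (X b - X a)`, set to `0` when `a = b`. -/
noncomputable def demazure (a b : σ) : MvPolynomial σ R →ₗ[R] MvPolynomial σ R :=
  if hab : a = b then 0 else
  have spec := fun P => (exists_mul_X_sub_X_eq_sub_rename_swap (R := R) a b P).choose_spec
  { toFun := fun P => (exists_mul_X_sub_X_eq_sub_rename_swap a b P).choose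
    map_add' := fun P Q => mul_right_cancel₀ (X_sub_X_ne_zero hab) <| by
      rw [add_mul, spec, spec, spec, map_add]; ring
    map_smul' := fun r P => mul_right_cancel₀ (X_sub_X_ne_zero hab) <| by
      rw [RingHom.id_apply, smul_mul_assoc, spec, spec, map_smul, smul_sub] }

theorem demazure_mul_X_sub_X (a b : σ) (P : MvPolynomial σ R) :
    demazure a b P * (X b - X a) = P - rename (Equiv.swap a b) P := by
  unfold demazure
  split_ifs with hab
  · subst hab; simp
  · exact (exists_mul_X_sub_X_eq_sub_rename_swap a b P).choose_spec

theorem demazure_self (a : σ) : demazure a a = (0 : MvPolynomial σ R →ₗ[R] _) := by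
  simp [demazure]

theorem demazure_eq_iff {a b : σ} (hab : a ≠ b) {P Q : MvPolynomial σ R} :
    demazure a b P = Q ↔ Q * (X b - X a) = P - rename (Equiv.swap a b) P := by
  rw [← demazure_mul_X_sub_X, mul_left_inj' (X_sub_X_ne_zero hab), eq_comm]

theorem demazure_swap (a b : σ) : demazure b a = (-demazure a b : MvPolynomial σ R →ₗ[R] _) := by
  by_cases hab : a = b
  · subst hab; simp [demazure_self]
  refine LinearMap.ext fun P => ?_
  rw [LinearMap.neg_apply, demazure_eq_iff (Ne.symm hab), Equiv.swap_comm]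
  linear_combination demazure_mul_X_sub_X a b P

variable {a b : σ}

theorem rename_swap_demazure (hab : a ≠ b) (P : MvPolynomial σ R) :
    rename (Equiv.swap a b) (demazure a b P) = demazure a b P := by
  symm
  have h := congrArg (rename (Equiv.swap a b)) (demazure_mul_X_sub_X a b P)
  simp only [map_mul, map_sub, rename_X, Equiv.swap_apply_left, Equiv.swap_apply_right,
    rename_swap_rename_swap] at h
  rw [demazure_eq_iff hab]
  linear_combination -h

theorem demazure_mul_self (hab : a ≠ b) :
    demazure a b * demazure a b = (0 : Module.End R (MvPolynomial σ R)) := by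
  refine LinearMap.ext fun P => ?_
  rw [Module.End.mul_apply, LinearMap.zero_apply, demazure_eq_iff hab,
    rename_swap_demazure hab, zero_mul, sub_self]

theorem demazure_apply_mul (hab : a ≠ b) (f g : MvPolynomial σ R) :
    demazure a b (f * g) = demazure a b f * g + rename (Equiv.swap a b) f * demazure a b g := by
  rw [demazure_eq_iff hab, map_mul]
  linear_combination g * demazure_mul_X_sub_X a b f +
    rename (Equiv.swap a b) f * demazure_mul_X_sub_X a b g

theorem demazure_apply_X (hab : a ≠ b) (i : σ) :
    demazure a b (X i : MvPolynomial σ R) =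
      (if i = b then 1 else 0) - (if i = a then 1 else 0) := by
  rw [demazure_eq_iff hab, rename_X]
  by_cases hia : i = a
  · subst hia; simp [hab]
  by_cases hib : i = b
  · subst hib; simp [hab.symm]
  simp [hia, hib, Equiv.swap_apply_of_ne_of_ne hia hib]

theorem demazure_eq_zero_of_rename_swap_eq (hab : a ≠ b) {m : MvPolynomial σ R}
    (hm : rename (Equiv.swap a b) m = m) : demazure a b m = 0 := by
  rw [demazure_eq_iff hab, hm, zero_mul, sub_self]

theorem demazure_mul_of_rename_swap_eq (hab : a ≠ b) {m : MvPolynomial σ R}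
    (hm : rename (Equiv.swap a b) m = m) (P : MvPolynomial σ R) :
    demazure a b (m * P) = m * demazure a b P := by
  rw [demazure_apply_mul hab, demazure_eq_zero_of_rename_swap_eq hab hm, hm, zero_mul, zero_add]

theorem rename_demazure (g : Equiv.Perm σ) (hab : a ≠ b) (P : MvPolynomial σ R) :
    rename g (demazure a b P) = demazure (g a) (g b) (rename g P) := by
  symm
  have h := congrArg (rename g) (demazure_mul_X_sub_X a b P)
  rw [map_mul, map_sub, map_sub, rename_X, rename_X] at h
  rw [demazure_eq_iff (g.injective.ne hab), h, rename_rename, rename_rename]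
  congr 3
  ext x
  simp [Equiv.swap_apply_apply]

theorem demazure_commute {c d : σ} (hab : a ≠ b) (hcd : c ≠ d) (hca : c ≠ a) (hcb : c ≠ b)
    (hda : d ≠ a) (hdb : d ≠ b) : Commute (demazure a b) (demazure c d : Module.End R _) := by
  refine LinearMap.ext fun P => ?_
  have hfix : rename (Equiv.swap c d) (X b - X a : MvPolynomial σ R) = X b - X a := by
    simp [Equiv.swap_apply_of_ne_of_ne, hca.symm, hcb.symm, hda.symm, hdb.symm]
  rw [Module.End.mul_apply, Module.End.mul_apply, demazure_eq_iff hab, rename_demazure _ hcd,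
    Equiv.swap_apply_of_ne_of_ne hca hcb, Equiv.swap_apply_of_ne_of_ne hda hdb, ← map_sub,
    ← demazure_mul_X_sub_X, mul_comm, ← demazure_mul_of_rename_swap_eq hcd hfix, mul_comm]

theorem demazure_demazure_demazure_mul {c : σ} (hab : a ≠ b) (hbc : b ≠ c) (hac : a ≠ c)
    (P : MvPolynomial σ R) :
    demazure b c (demazure a b (demazure b c P)) * ((X b - X a) * (X c - X b) * (X c - X a)) =
      P - rename (Equiv.swap a b) P - rename (Equiv.swap b c) P
        + rename (Equiv.swap a b) (rename (Equiv.swap b c) P)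
        + rename (Equiv.swap b c) (rename (Equiv.swap a b) P)
        - rename (Equiv.swap c a) P := by
  set Q := demazure b c P
  set s₁ := rename (R := R) (Equiv.swap a b)
  set s₂ := rename (R := R) (Equiv.swap b c)
  have hQ : Q * (X c - X b) = P - s₂ P := demazure_mul_X_sub_X b c P
  have h₁ := demazure_mul_X_sub_X a b Q
  have h₂ := demazure_mul_X_sub_X b c (demazure a b Q)
  -- `h₃`, `h₅`, `h₆` transport `h₁` and `hQ` by `s₂`, `s₁`, `s₂ s₁`, which permute the differences
  have h₃ := congrArg s₂ h₁
  have h₄ : s₂ Q = Q := rename_swap_demazure hbc P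
  have h₅ := congrArg s₁ hQ
  have h₆ := congrArg (s₂ ∘ s₁) hQ
  have hs₂₁₂ : s₂ (s₁ (s₂ P)) = rename (Equiv.swap c a) P := by
    simp only [s₁, s₂, rename_rename, ← Equiv.Perm.coe_mul, ← mul_assoc,
      Equiv.swap_mul_swap_mul_swap hab hac]
  simp only [Function.comp_apply, map_mul, map_sub, rename_X, s₁, s₂, Equiv.swap_apply_left,
    Equiv.swap_apply_right, Equiv.swap_apply_of_ne_of_ne, hab, hac, hbc.symm,
    hac.symm, ne_eq, not_false_eq_true] at h₃ h₅ h₆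
  rw [hs₂₁₂] at h₆
  linear_combination ((X b - X a) * (X c - X a)) * h₂ + (X c - X a) * h₁ - (X b - X a) * h₃
    - (X b - X a) * h₄ + hQ - h₅ + h₆

theorem demazure_braid {c : σ} (hab : a ≠ b) (hbc : b ≠ c) (hac : a ≠ c) :
    demazure b c * demazure a b * demazure b c =
      (demazure a b * demazure b c * demazure a b : Module.End R (MvPolynomial σ R)) := by
  have hΔ : ((X b - X a) * (X c - X b) * (X c - X a) : MvPolynomial σ R) ≠ 0 :=
    mul_ne_zero (mul_ne_zero (X_sub_X_ne_zero hab) (X_sub_X_ne_zero hbc)) (X_sub_X_ne_zero hac)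
  refine LinearMap.ext fun P => mul_right_cancel₀ hΔ ?_
  have h := demazure_demazure_demazure_mul hbc.symm hab.symm hac.symm P
  rw [demazure_swap a b, demazure_swap b c, Equiv.swap_comm c b, Equiv.swap_comm b a,
    Equiv.swap_comm a c] at h
  simp only [LinearMap.neg_apply, map_neg] at h
  simp only [Module.End.mul_apply]
  rw [demazure_demazure_demazure_mul hab hbc hac]
  linear_combination -h

end MvPolynomial

theorem NHGen.lo_ne_hi {n : ℕ} (k : Fin (n - 1)) : NHGen.lo k ≠ NHGen.hi k :=
  Fin.ne_of_val_ne (Nat.ne_add_one _)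

namespace NilHecke

variable (K : Type) [Field K] (n : ℕ)

noncomputable def polyRepGen : NHGen n → Module.End K (MvPolynomial (Fin n) K)
  | .x i => Algebra.lmul K _ (X i)
  | .t k => demazure (NHGen.lo k) (NHGen.hi k)

variable {K n} in
theorem lift_polyRepGen_eq_of_rel {x y : FreeAlgebra K (NHGen n)} (h : NHRel K n x y) :
    FreeAlgebra.lift K (polyRepGen K n) x = FreeAlgebra.lift K (polyRepGen K n) y := by
  cases h with
  | xx i j =>
    simp only [map_mul, FreeAlgebra.lift_ι_apply, polyRepGen]
    exact ((Commute.all _ _).map _).eq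
  | tsq k =>
    simp only [map_mul, map_zero, FreeAlgebra.lift_ι_apply, polyRepGen]
    exact demazure_mul_self (NHGen.lo_ne_hi k)
  | tx k i =>
    refine LinearMap.ext fun P => ?_
    simp only [map_sub, map_mul, FreeAlgebra.lift_ι_apply, polyRepGen, LinearMap.sub_apply,
      Module.End.mul_apply, Algebra.coe_lmul_eq_mul, LinearMap.mul_apply_apply,
      demazure_apply_mul (NHGen.lo_ne_hi k), demazure_apply_X (NHGen.lo_ne_hi k)]
    split_ifs <;> simp
  | tt k l h =>
    simp only [map_mul, FreeAlgebra.lift_ι_apply, polyRepGen]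
    refine (demazure_commute (NHGen.lo_ne_hi k) (NHGen.lo_ne_hi l) ?_ ?_ ?_ ?_).eq <;>
      exact Fin.ne_of_val_ne (by dsimp only [NHGen.lo, NHGen.hi]; omega)
  | braid k l h =>
    have hlo : NHGen.lo l = NHGen.hi k := Fin.ext h
    simp only [map_mul, FreeAlgebra.lift_ι_apply, polyRepGen, hlo]
    exact demazure_braid (NHGen.lo_ne_hi k) (hlo ▸ NHGen.lo_ne_hi l)
      (Fin.ne_of_val_ne (by dsimp only [NHGen.lo, NHGen.hi]; omega))

noncomputable def polyRep : NilHecke K n →ₐ[K] Module.End K (MvPolynomial (Fin n) K) :=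
  RingQuot.liftAlgHom K ⟨FreeAlgebra.lift K (polyRepGen K n), fun _ _ => lift_polyRepGen_eq_of_rel⟩

variable {K n}

theorem polyRep_mkAlgHom (y : FreeAlgebra K (NHGen n)) :
    polyRep K n (RingQuot.mkAlgHom K (NHRel K n) y) = FreeAlgebra.lift K (polyRepGen K n) y :=
  RingQuot.liftAlgHom_mkAlgHom_apply _ _ _ _

theorem polyRep_xgen (i : Fin n) : polyRep K n (xgen i) = Algebra.lmul K _ (X i) := by
  rw [xgen, polyRep_mkAlgHom, FreeAlgebra.lift_ι_apply, polyRepGen]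

theorem polyRep_tgen (k : Fin (n - 1)) :
    polyRep K n (tgen k) = demazure (NHGen.lo k) (NHGen.hi k) := by
  rw [tgen, polyRep_mkAlgHom, FreeAlgebra.lift_ι_apply, polyRepGen]

theorem polyRep_mem_centralizer_lmul {s : MvPolynomial (Fin n) K}
    (hs : s ∈ symmetricSubalgebra (Fin n) K) (h : NilHecke K n) :
    polyRep K n h ∈ Subalgebra.centralizer K {Algebra.lmul K _ s} := by
  obtain ⟨y, rfl⟩ := RingQuot.mkAlgHom_surjective K (NHRel K n) h
  suffices (FreeAlgebra.lift K (polyRepGen K n)).range ≤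
      Subalgebra.centralizer K {Algebra.lmul K _ s} by
    rw [polyRep_mkAlgHom]; exact this ⟨y, rfl⟩
  rw [← Algebra.adjoin_range_eq_range_freeAlgebra_lift, Algebra.adjoin_le_iff]
  rintro _ ⟨i | k, rfl⟩ _ rfl
  · exact ((Commute.all _ _).map _).eq
  · refine LinearMap.ext fun P => ?_
    exact (demazure_mul_of_rename_swap_eq (NHGen.lo_ne_hi k)
      ((mem_symmetricSubalgebra s).1 hs _) P).symm

end NilHecke

/-- The assignment `x_k ↦ (multiplication by x_k)`,
`τ_k ↦ (Demazure operator ∂_k)` on `P_n = K[x_1,…,x_n]` defines a well-defined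
`K`-algebra homomorphism `H_n → End_{P_n^{S_n}}(P_n)`: there is a `K`-algebra map
`φ` from the presented algebra `H_n` to the endomorphisms of `P_n`, whose values are
`P_n^{S_n}`-linear, sending `x_k` to multiplication by `x_k` and `τ_k` to the operator
characterized by `(φ τ_k P)·(x_{k+1} − x_k) = P − s_k(P)`. -/
theorem nilHecke_polynomial_representation (K : Type) [Field K] (n : ℕ) :
    ∃ φ : NilHecke K n →ₐ[K] Module.End K (MvPolynomial (Fin n) K),
      (∀ (h : NilHecke K n) (s : MvPolynomial (Fin n) K),
        s ∈ symmetricSubalgebra (Fin n) K →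
        ∀ P : MvPolynomial (Fin n) K, φ h (s * P) = s * φ h P) ∧
      (∀ (i : Fin n) (P : MvPolynomial (Fin n) K), φ (xgen i) P = X i * P) ∧
      (∀ (k : Fin (n - 1)) (P : MvPolynomial (Fin n) K),
        φ (tgen k) P * (X (NHGen.hi k) - X (NHGen.lo k)) =
          P - rename (Equiv.swap (NHGen.lo k) (NHGen.hi k)) P) := by
  refine ⟨NilHecke.polyRep K n, fun h s hs P => ?_, fun i P => ?_, fun k P => ?_⟩
  · exact (LinearMap.congr_fun (NilHecke.polyRep_mem_centralizer_lmul hs h _ rfl) P).symm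
  · rw [NilHecke.polyRep_xgen]; rfl
  · rw [NilHecke.polyRep_tgen]; exact demazure_mul_X_sub_X _ _ P
end
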